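/- Let X ∈ ℝ^{d×n} have rank n, let X_i be X with its i-th column zeroed, y ∈ ℝ^n, y_i the vector y with i-th entry zeroed. Let w_S^† and w_{S_i}^† be the minimum norm solutions (w_S^†)ᵀ = yᵀX^† and (w_{S_i}^†)ᵀ = y_iᵀ(X_i)^†. Then ‖w_S^† − w_{S_i}^†‖ ≤ ‖X^†‖_op · ‖y‖. -/

import Mathlib

/-!
Let `D` be the diagonal projection killing the `i`-th coordinate, so `X_i = X D` and `y_i = D y`.
Full column rank makes `X^†` a left inverse of `X`. The Moore–Penrose equations for `X_i^†` give
`D X_i^† = X_i^†` (so `y_i` may be replaced by `y`) and `(X_i^†)ᵀ = X_i X_i^† (X_i^†)ᵀ`, whence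
`X^† (X_i^†)ᵀ = D X_i^† (X_i^†)ᵀ = X_i^† (X_i^†)ᵀ`. Thus `⟨w_S^†, w_{S_i}^†⟩ = ‖w_{S_i}^†‖²`, and
Pythagoras gives `‖w_S^† − w_{S_i}^†‖ ≤ ‖w_S^†‖ = ‖(X^†)ᵀ y‖ ≤ ‖X^†‖_op ‖y‖`.
-/

open Matrix

/-- `B` satisfies the four Moore–Penrose conditions for `A`. -/
def IsMoorePenrose {d n : ℕ} (A : Matrix (Fin d) (Fin n) ℝ)
    (B : Matrix (Fin n) (Fin d) ℝ) : Prop :=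
  A * B * A = A ∧ B * A * B = B ∧ (A * B)ᵀ = A * B ∧ (B * A)ᵀ = B * A

/-- Operator norm of a matrix with respect to Euclidean norms. -/
noncomputable def opNorm {m n : ℕ} (A : Matrix (Fin m) (Fin n) ℝ) : ℝ :=
  ‖LinearMap.toContinuousLinearMap (Matrix.toEuclideanLin A)‖

/-- Euclidean norm of a vector. -/
noncomputable def enorm {n : ℕ} (v : Fin n → ℝ) : ℝ :=
  Real.sqrt (∑ i, v i ^ 2)

namespace IsMoorePenrose

variable {m n : ℕ} {A : Matrix (Fin m) (Fin n) ℝ} {B : Matrix (Fin n) (Fin m) ℝ}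

theorem mul_eq_one (hB : IsMoorePenrose A B) (hA : LinearIndependent ℝ A.col) : B * A = 1 :=
  ext_iff_mulVec.2 fun v => mulVec_injective_iff.2 hA <| by
    simp only [mulVec_mulVec, ← Matrix.mul_assoc, hB.1, Matrix.mul_one]

theorem mul_eq_self_of_mul_eq_self (hB : IsMoorePenrose A B) {P : Matrix (Fin n) (Fin n) ℝ}
    (hP : Pᵀ = P) (hAP : A * P = A) : P * B = B := by
  obtain ⟨-, hBAB, -, hBA⟩ := hB
  have hPA : P * Aᵀ = Aᵀ := by rw [← hP, ← transpose_mul, hAP]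
  calc P * B = P * (B * A)ᵀ * B := by rw [hBA, Matrix.mul_assoc P, hBAB]
    _ = (B * A)ᵀ * B := by rw [transpose_mul, ← Matrix.mul_assoc, hPA]
    _ = B := by rw [hBA, hBAB]

theorem transpose_eq (hB : IsMoorePenrose A B) : Bᵀ = A * (B * Bᵀ) := by
  obtain ⟨-, hBAB, hAB, -⟩ := hB
  conv_lhs => rw [← hBAB, Matrix.mul_assoc, transpose_mul, hAB]
  rw [Matrix.mul_assoc]

end IsMoorePenrose

section EuclideanNorm

open scoped Matrix.Norms.L2Operator

theorem enorm_eq_norm_toLp {n : ℕ} (v : Fin n → ℝ) : _root_.enorm v = ‖WithLp.toLp 2 v‖ := by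
  simp [_root_.enorm, EuclideanSpace.norm_eq]

theorem enorm_vecMul_le {m n : ℕ} (A : Matrix (Fin m) (Fin n) ℝ) (y : Fin m → ℝ) :
    _root_.enorm (y ᵥ* A) ≤ opNorm A * _root_.enorm y := by
  have h := Aᵀ.l2_opNorm_mulVec (WithLp.toLp 2 y)
  rw [← conjTranspose_eq_transpose_of_trivial, l2_opNorm_conjTranspose] at h
  rwa [enorm_eq_norm_toLp, enorm_eq_norm_toLp, ← mulVec_transpose]

end EuclideanNorm

theorem norm_sub_le_of_inner_eq {E : Type*} [NormedAddCommGroup E] [InnerProductSpace ℝ E]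
    {u v : E} (h : inner ℝ u v = inner ℝ v v) : ‖u - v‖ ≤ ‖u‖ := by
  have hpyth := norm_add_sq_eq_norm_sq_add_norm_sq_real (x := u - v) (y := v)
    (by rw [inner_sub_left, h, sub_self])
  rw [sub_add_cancel] at hpyth
  exact (mul_self_le_mul_self_iff (norm_nonneg _) (norm_nonneg _)).2
    (hpyth ▸ le_add_of_nonneg_right (mul_self_nonneg _))

theorem enorm_sub_le_of_dotProduct_eq {n : ℕ} {u v : Fin n → ℝ} (h : u ⬝ᵥ v = v ⬝ᵥ v) :
    _root_.enorm (u - v) ≤ _root_.enorm u := by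
  simp only [enorm_eq_norm_toLp, WithLp.toLp_sub]
  exact norm_sub_le_of_inner_eq <| by
    simpa only [EuclideanSpace.inner_toLp_toLp, star_trivial, dotProduct_comm v u] using h

section Stability

variable {d n : ℕ} {X : Matrix (Fin d) (Fin n) ℝ} {B C : Matrix (Fin n) (Fin d) ℝ}
  {P : Matrix (Fin n) (Fin n) ℝ}

theorem IsMoorePenrose.mul_transpose_eq_of_mul_eq_one (hC : IsMoorePenrose (X * P) C)
    (hBX : B * X = 1) (hPC : P * C = C) : B * Cᵀ = C * Cᵀ := by
  calc B * Cᵀ = B * (X * P * (C * Cᵀ)) := by rw [← hC.transpose_eq]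
    _ = B * X * (P * C) * Cᵀ := by simp only [Matrix.mul_assoc]
    _ = C * Cᵀ := by rw [hBX, hPC, Matrix.one_mul]

theorem enorm_vecMul_sub_le_of_mul_eq_one (hBX : B * X = 1) (hP : Pᵀ = P)
    (hPP : P * P = P) (hC : IsMoorePenrose (X * P) C) (y : Fin n → ℝ) :
    _root_.enorm (y ᵥ* B - (y ᵥ* P) ᵥ* C) ≤ opNorm B * _root_.enorm y := by
  have hPC : P * C = C := hC.mul_eq_self_of_mul_eq_self hP (by rw [Matrix.mul_assoc, hPP])
  have hdot : (y ᵥ* B) ⬝ᵥ (y ᵥ* C) = (y ᵥ* C) ⬝ᵥ (y ᵥ* C) := by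
    simp only [← dotProduct_mulVec, mulVec_vecMul, hC.mul_transpose_eq_of_mul_eq_one hBX hPC]
  rw [vecMul_vecMul, hPC]
  exact (enorm_sub_le_of_dotProduct_eq hdot).trans (enorm_vecMul_le B y)

end Stability

/-- Stability of minimum norm solutions to linear regression: if `X ∈ ℝ^{d×n}` has rank
`n`, `X_i` is `X` with its `i`-th column zeroed and `y_i` is `y` with `i`-th entry zeroed,
then the minimum norm solutions `(w_S^†)ᵀ = yᵀX^†` and `(w_{S_i}^†)ᵀ = y_iᵀ(X_i)^†`
satisfy `‖w_S^† − w_{S_i}^†‖ ≤ ‖X^†‖_op‖y‖`. -/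
theorem linear_min_norm_stability {d n : ℕ} (X : Matrix (Fin d) (Fin n) ℝ)
    (hX : LinearIndependent ℝ fun j : Fin n => Xᵀ j)
    (i : Fin n) (y : Fin n → ℝ)
    (B Bi : Matrix (Fin n) (Fin d) ℝ)
    (hB : IsMoorePenrose X B)
    (hBi : IsMoorePenrose (Matrix.of fun r c => if c = i then (0 : ℝ) else X r c) Bi) :
    _root_.enorm (Matrix.vecMul y B - Matrix.vecMul (Function.update y i 0) Bi)
      ≤ opNorm B * _root_.enorm y := by
  set D : Matrix (Fin n) (Fin n) ℝ := diagonal (Function.update 1 i 0) with hD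
  have hXi : (of fun r c => if c = i then (0 : ℝ) else X r c) = X * D := by
    ext r c; by_cases hc : c = i <;> simp [hD, hc]
  have hyi : Function.update y i 0 = y ᵥ* D := by
    ext c; by_cases hc : c = i <;> simp [hD, hc, vecMul_diagonal]
  have hDD : D * D = D := by
    rw [hD, diagonal_mul_diagonal]; congr 1; ext c; by_cases hc : c = i <;> simp [hc]
  rw [hXi] at hBi
  rw [hyi]
  exact enorm_vecMul_sub_le_of_mul_eq_one (hB.mul_eq_one hX)
    (diagonal_transpose _) hDD hBi y
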